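/- arXiv:1602.02199 — 5 statements merged into one kernel-verified Lean document; each statement's English description precedes it below -/
import Mathlib

section
/- Let f : ℂ^{n×n} → ℂ^{n×n} be admissible. Then f preserves conjugate transposes: f(A^H) = f(A)^H for every matrix A ∈ ℂ^{n×n}. -/
open Matrix Filter Topology
open scoped ComplexOrder

noncomputable section

/-- Square complex matrices of size `n`. -/
abbrev Mat (n : ℕ) := Matrix (Fin n) (Fin n) ℂ

/-- An operator `f` on complex `n × n` matrices is *admissible* if it satisfies
(a1) `f (f X) = X`, (a2) additivity, (a3) multiplicativity, and
(a4) `f X` is positive semidefinite whenever `X` is. -/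
def Admissible {n : ℕ} (f : Mat n → Mat n) : Prop :=
  (∀ X, f (f X) = X) ∧
  (∀ X Y, f (X + Y) = f X + f Y) ∧
  (∀ X Y, f (X * Y) = f X * f Y) ∧
  (∀ X, X.PosSemidef → (f X).PosSemidef)

/-!
An admissible `f` is a ring automorphism. Positivity makes it preserve Hermitian matrices, because
`4 X = (X + 1)ᴴ (X + 1) - (X - 1)ᴴ (X - 1)` for Hermitian `X`. The image `J` of `I • 1` is central
with `J * J = -1`, hence `J = ± I • 1` and `Jᴴ = -J`. Writing `A = ℜ A + I • ℑ A` with `ℜ A`, `ℑ A`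
Hermitian, `f Aᴴ = f (ℜ A) - J * f (ℑ A) = (f (ℜ A) + J * f (ℑ A))ᴴ = (f A)ᴴ`.
-/

open ComplexStarModule

lemma star_eq_realPart_sub_I_smul_imaginaryPart {A : Type*} [AddCommGroup A] [Module ℂ A]
    [StarAddMonoid A] [StarModule ℂ A] (a : A) : star a = (ℜ a : A) - Complex.I • (ℑ a : A) := by
  rw [realPart_apply_coe, imaginaryPart_apply_coe, smul_smul, mul_neg, Complex.I_mul_I]
  module

lemma IsSelfAdjoint.four_nsmul_eq {R : Type*} [Ring R] [StarRing R] {x : R}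
    (hx : IsSelfAdjoint x) : 4 • x = star (x + 1) * (x + 1) - star (x - 1) * (x - 1) := by
  simp only [star_add, star_sub, star_one, hx.star_eq]
  noncomm_ring

lemma MulEquiv.map_mem_center {M N : Type*} [Semigroup M] [Semigroup N] (φ : M ≃* N) {z : M}
    (hz : z ∈ Set.center M) : φ z ∈ Set.center N := by
  rw [Semigroup.mem_center_iff] at hz ⊢
  intro y
  rw [← φ.apply_symm_apply y, ← map_mul, ← map_mul, hz]

namespace Matrix

variable {ι κ : Type*} [Fintype ι] [DecidableEq ι]

lemma IsHermitian.map_of_posSemidef (φ : Matrix ι ι ℂ →+ Matrix κ κ ℂ)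
    (hφ : ∀ X, X.PosSemidef → (φ X).PosSemidef) {X : Matrix ι ι ℂ} (hX : X.IsHermitian) :
    (φ X).IsHermitian := by
  have h4 : (4 • φ X).IsHermitian := by
    rw [← map_nsmul, hX.isSelfAdjoint.four_nsmul_eq, map_sub]
    exact (hφ _ (posSemidef_conjTranspose_mul_self _)).isHermitian.sub
      (hφ _ (posSemidef_conjTranspose_mul_self _)).isHermitian
  ext i j
  simpa using congrFun (congrFun h4 i) j

lemma conjTranspose_eq_neg_of_mem_center {J : Matrix ι ι ℂ} (hJ : J ∈ Set.center (Matrix ι ι ℂ))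
    (hJJ : J * J = -1) : Jᴴ = -J := by
  obtain ⟨c, rfl⟩ : J ∈ Set.range (scalar ι) := by rwa [← center_eq_range]
  rcases isEmpty_or_nonempty ι with hι | ⟨⟨i⟩⟩
  · exact Subsingleton.elim _ _
  have hc : c * c = Complex.I * Complex.I := by
    simpa using congrFun (congrFun hJJ i) i
  rcases mul_self_eq_mul_self_iff.mp hc with rfl | rfl <;>
    simp [scalar_apply, diagonal_conjTranspose, ← diagonal_neg, Pi.star_def]

theorem _root_.RingEquiv.map_conjTranspose_of_isHermitian (φ : Matrix ι ι ℂ ≃+* Matrix ι ι ℂ)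
    (hφ : ∀ X, X.IsHermitian → (φ X).IsHermitian) (A : Matrix ι ι ℂ) : φ Aᴴ = (φ A)ᴴ := by
  set J := φ (Complex.I • 1)
  have hJ : J ∈ Set.center _ := φ.toMulEquiv.map_mem_center <| by
    simpa only [Algebra.algebraMap_eq_smul_one] using Set.algebraMap_mem_center Complex.I
  have hJJ : J * J = -1 := by
    rw [← map_mul, smul_mul_smul_comm, one_mul, Complex.I_mul_I, neg_one_smul, map_neg, map_one]
  have hI : ∀ X, φ (Complex.I • X) = J * φ X := fun X ↦ by rw [← map_mul, smul_one_mul]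
  have hre := hφ _ (ℜ A).2
  have him := hφ _ (ℑ A).2
  calc φ Aᴴ = φ (ℜ A) - J * φ (ℑ A) := by
        rw [← star_eq_conjTranspose, star_eq_realPart_sub_I_smul_imaginaryPart, map_sub, hI]
    _ = (φ (ℜ A) + J * φ (ℑ A))ᴴ := by
        rw [conjTranspose_add, conjTranspose_mul, hre.eq, him.eq,
          conjTranspose_eq_neg_of_mem_center hJ hJJ, mul_neg, ← (Set.mem_center_iff.1 hJ).comm]
        abel
    _ = (φ A)ᴴ := by rw [← hI, ← map_add, realPart_add_I_smul_imaginaryPart]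

end Matrix

def Admissible.toRingEquiv {n : ℕ} {f : Mat n → Mat n} (hf : Admissible f) : Mat n ≃+* Mat n where
  toEquiv := Function.Involutive.toPerm f hf.1
  map_mul' := hf.2.2.1
  map_add' := hf.2.1

/-- an admissible operator preserves conjugate transposes. -/
theorem stmt_1 {n : ℕ} (f : Mat n → Mat n) (hf : Admissible f) (A : Mat n) :
    f Aᴴ = (f A)ᴴ :=
  hf.toRingEquiv.map_conjTranspose_of_isHermitian
    (fun _ ↦ IsHermitian.map_of_posSemidef hf.toRingEquiv.toAddMonoidHom hf.2.2.2) A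
end
end

section
/- Suppose that Q^(s) − B^(t) is invertible for all integers s, t ≥ 1, so that the sequences (A^(k), B^(k), Q^(k)) are well defined. Then for all integers i, j ≥ 1: A^(i+j) = A^(j)(Q^(j) − B^(i))^{-1} A^(i), B^(i+j) = B^(j) + A^(j)(Q^(j) − B^(i))^{-1}(A^(j))^H, and Q^(i+j) = Q^(i) − (A^(i))^H (Q^(j) − B^(i))^{-1} A^(i). -/
open Matrix Filter Topology
open scoped ComplexOrder

noncomputable section

/-- The general recursion of the paper: with constant matrices `(Ac, Bc, Qc)` and
initial triple `init = (A⁽¹⁾, B⁽¹⁾, Q⁽¹⁾)`, step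
`(A, B, Q) ↦ (Ac (Qc - B)⁻¹ A, Bc + Ac (Qc - B)⁻¹ Acᴴ, Q - Aᴴ (Qc - B)⁻¹ A)`.
Index `k : ℕ` corresponds to the paper's index `k + 1`. -/
def nmeIter {n : ℕ} (Ac Bc Qc : Mat n) (init : Mat n × Mat n × Mat n) :
    ℕ → Mat n × Mat n × Mat n
  | 0 => init
  | k + 1 =>
    let p := nmeIter Ac Bc Qc init k
    (Ac * (Qc - p.2.1)⁻¹ * p.1,
     Bc + Ac * (Qc - p.2.1)⁻¹ * Acᴴ,
     p.2.2 - p.1ᴴ * (Qc - p.2.1)⁻¹ * p.1)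

/-- The sequence `(A⁽ᵏ⁾, B⁽ᵏ⁾, Q⁽ᵏ⁾)` (indexed from `0`, so `plusSeq f A Q k` is the
paper's `(A^{(k+1)}, B^{(k+1)}, Q^{(k+1)})`) for the plus-sign equation
`X + Aᴴ f(X)⁻¹ A = Q`. -/
def plusSeq {n : ℕ} (f : Mat n → Mat n) (A Q : Mat n) : ℕ → Mat n × Mat n × Mat n :=
  nmeIter (f A * (f Q)⁻¹ * A) (f A * (f Q)⁻¹ * (f A)ᴴ) (Q - Aᴴ * (f Q)⁻¹ * A)
    (f A * (f Q)⁻¹ * A, f A * (f Q)⁻¹ * (f A)ᴴ, Q - Aᴴ * (f Q)⁻¹ * A)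

/-- `As f A Q k` is the paper's `A^{(k+1)}`. -/
def As {n : ℕ} (f : Mat n → Mat n) (A Q : Mat n) (k : ℕ) : Mat n := (plusSeq f A Q k).1
/-- `Bs f A Q k` is the paper's `B^{(k+1)}`. -/
def Bs {n : ℕ} (f : Mat n → Mat n) (A Q : Mat n) (k : ℕ) : Mat n := (plusSeq f A Q k).2.1
/-- `Qs f A Q k` is the paper's `Q^{(k+1)}`. -/
def Qs {n : ℕ} (f : Mat n → Mat n) (A Q : Mat n) (k : ℕ) : Mat n := (plusSeq f A Q k).2.2

/- ### Auxiliary lemmas -/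

/-- Recursion for `As`. -/
lemma As_succ {n : ℕ} (f : Mat n → Mat n) (A Q : Mat n) (k : ℕ) :
    As f A Q (k + 1) = As f A Q 0 * (Qs f A Q 0 - Bs f A Q k)⁻¹ * As f A Q k := rfl

/-- Recursion for `Bs`. -/
lemma Bs_succ {n : ℕ} (f : Mat n → Mat n) (A Q : Mat n) (k : ℕ) :
    Bs f A Q (k + 1) = Bs f A Q 0 + As f A Q 0 * (Qs f A Q 0 - Bs f A Q k)⁻¹ * (As f A Q 0)ᴴ :=
  rfl

/-- Recursion for `Qs`. -/
lemma Qs_succ {n : ℕ} (f : Mat n → Mat n) (A Q : Mat n) (k : ℕ) :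
    Qs f A Q (k + 1) = Qs f A Q k - (As f A Q k)ᴴ * (Qs f A Q 0 - Bs f A Q k)⁻¹ * As f A Q k :=
  rfl

/-- A "push-through" identity for matrix inverses. -/
lemma key1 {n : ℕ} (P R C D : Mat n) (hP : IsUnit P) (hR : IsUnit R)
    (hM : IsUnit (P - C * R⁻¹ * D)) (hW : IsUnit (R - D * P⁻¹ * C)) :
    P⁻¹ * C * (R - D * P⁻¹ * C)⁻¹ = (P - C * R⁻¹ * D)⁻¹ * C * R⁻¹ := by
  have hPd := (Matrix.isUnit_iff_isUnit_det P).mp hP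
  have hRd := (Matrix.isUnit_iff_isUnit_det R).mp hR
  have hMd := (Matrix.isUnit_iff_isUnit_det _).mp hM
  have hWd := (Matrix.isUnit_iff_isUnit_det _).mp hW
  have h2 : (P - C * R⁻¹ * D) * (P⁻¹ * C) = C * R⁻¹ * (R - D * P⁻¹ * C) := by
    have e1 : P * (P⁻¹ * C) = C := Matrix.mul_nonsing_inv_cancel_left _ _ hPd
    have e2 : C * R⁻¹ * R = C := Matrix.nonsing_inv_mul_cancel_right _ _ hRd
    rw [Matrix.sub_mul, Matrix.mul_sub, e1, e2]
    noncomm_ring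
  have h1 : (P - C * R⁻¹ * D) * (P⁻¹ * C * (R - D * P⁻¹ * C)⁻¹) = C * R⁻¹ := by
    rw [← mul_assoc, h2, Matrix.mul_nonsing_inv_cancel_right _ _ hWd]
  have h3 := congrArg (fun X => (P - C * R⁻¹ * D)⁻¹ * X) h1
  simpa only [Matrix.nonsing_inv_mul_cancel_left _ _ hMd, ← mul_assoc] using h3

/-- The Sherman–Morrison–Woodbury identity. -/
lemma key2 {n : ℕ} (P R C D : Mat n) (hP : IsUnit P) (hR : IsUnit R)
    (hM : IsUnit (P - C * R⁻¹ * D)) (hW : IsUnit (R - D * P⁻¹ * C)) :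
    (P - C * R⁻¹ * D)⁻¹ = P⁻¹ + P⁻¹ * C * (R - D * P⁻¹ * C)⁻¹ * D * P⁻¹ := by
  have hPd := (Matrix.isUnit_iff_isUnit_det P).mp hP
  have hMd := (Matrix.isUnit_iff_isUnit_det _).mp hM
  have h1 : (P - C * R⁻¹ * D)⁻¹ * (P - C * R⁻¹ * D) = 1 := Matrix.nonsing_inv_mul _ hMd
  have h2 : (P - C * R⁻¹ * D)⁻¹ * P = 1 + (P - C * R⁻¹ * D)⁻¹ * C * R⁻¹ * D := by
    rw [Matrix.mul_sub] at h1
    have h1' := sub_eq_iff_eq_add.mp h1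
    calc (P - C * R⁻¹ * D)⁻¹ * P = 1 + (P - C * R⁻¹ * D)⁻¹ * (C * R⁻¹ * D) := h1'
      _ = 1 + (P - C * R⁻¹ * D)⁻¹ * C * R⁻¹ * D := by noncomm_ring
  have h3 : (P - C * R⁻¹ * D)⁻¹ * P * P⁻¹ = (1 + (P - C * R⁻¹ * D)⁻¹ * C * R⁻¹ * D) * P⁻¹ := by
    rw [h2]
  rw [Matrix.mul_nonsing_inv_cancel_right _ _ hPd] at h3
  rw [h3, ← key1 P R C D hP hR hM hW]
  noncomm_ring

/-- The dual Sherman–Morrison–Woodbury identity. -/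
lemma key3 {n : ℕ} (P R C D : Mat n) (hP : IsUnit P) (hR : IsUnit R)
    (hM : IsUnit (P - C * R⁻¹ * D)) (hW : IsUnit (R - D * P⁻¹ * C)) :
    (R - D * P⁻¹ * C)⁻¹ = R⁻¹ + R⁻¹ * D * (P - C * R⁻¹ * D)⁻¹ * C * R⁻¹ :=
  key2 R P D C hR hP hW hM

/-- the group-like law for the sequences of the plus-sign equation.
Here `As f A Q k` etc. denote the paper's `A^{(k+1)}` etc., so the paper's identities for
`i, j ≥ 1` become identities at the index `i + j + 1` for all `i j : ℕ`. -/
theorem stmt_2 {n : ℕ} (f : Mat n → Mat n) (hf : Admissible f)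
    (A Q : Mat n) (hQ : Q.PosDef)
    (hinv : ∀ s t, IsUnit (Qs f A Q s - Bs f A Q t)) :
    ∀ i j : ℕ,
      As f A Q (i + j + 1) =
        As f A Q j * (Qs f A Q j - Bs f A Q i)⁻¹ * As f A Q i ∧
      Bs f A Q (i + j + 1) =
        Bs f A Q j + As f A Q j * (Qs f A Q j - Bs f A Q i)⁻¹ * (As f A Q j)ᴴ ∧
      Qs f A Q (i + j + 1) =
        Qs f A Q i - (As f A Q i)ᴴ * (Qs f A Q j - Bs f A Q i)⁻¹ * As f A Q i := by
  -- Hermitian structure of the sequences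
  have hfQH : ((f Q)⁻¹).IsHermitian := (hf.2.2.2 Q hQ.posSemidef).1.inv
  have hQ0 : (Qs f A Q 0).IsHermitian := by
    show (Q - Aᴴ * (f Q)⁻¹ * A).IsHermitian
    exact hQ.isHermitian.sub (isHermitian_conjTranspose_mul_mul A hfQH)
  have hB0 : (Bs f A Q 0).IsHermitian := by
    show (f A * (f Q)⁻¹ * (f A)ᴴ).IsHermitian
    exact isHermitian_mul_mul_conjTranspose (f A) hfQH
  have herm : ∀ k, (Qs f A Q k).IsHermitian ∧ (Bs f A Q k).IsHermitian := by
    intro k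
    induction k with
    | zero => exact ⟨hQ0, hB0⟩
    | succ k ih =>
      have hi : ((Qs f A Q 0 - Bs f A Q k)⁻¹).IsHermitian := (hQ0.sub ih.2).inv
      constructor
      · rw [Qs_succ]
        exact ih.1.sub (isHermitian_conjTranspose_mul_mul _ hi)
      · rw [Bs_succ]
        exact hB0.add (isHermitian_mul_mul_conjTranspose _ hi)
  intro i j
  induction j with
  | zero => exact ⟨rfl, rfl, rfl⟩
  | succ j ih =>
    obtain ⟨ihA, ihB, ihQ⟩ := ih
    -- notation for the key-lemma instantiation
    have hP : IsUnit (Qs f A Q 0 - Bs f A Q j) := hinv 0 j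
    have hR : IsUnit (Qs f A Q j - Bs f A Q i) := hinv j i
    have hM : IsUnit ((Qs f A Q 0 - Bs f A Q j) -
        As f A Q j * (Qs f A Q j - Bs f A Q i)⁻¹ * (As f A Q j)ᴴ) := by
      have h := hinv 0 (i + j + 1)
      rwa [ihB, sub_add_eq_sub_sub] at h
    have hW : IsUnit ((Qs f A Q j - Bs f A Q i) -
        (As f A Q j)ᴴ * (Qs f A Q 0 - Bs f A Q j)⁻¹ * As f A Q j) := by
      have h := hinv (j + 1) i
      rwa [Qs_succ, sub_right_comm] at h
    have eM' : (Qs f A Q 0 -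
        (Bs f A Q j + As f A Q j * (Qs f A Q j - Bs f A Q i)⁻¹ * (As f A Q j)ᴴ))⁻¹ =
        ((Qs f A Q 0 - Bs f A Q j) -
          As f A Q j * (Qs f A Q j - Bs f A Q i)⁻¹ * (As f A Q j)ᴴ)⁻¹ := by
      rw [sub_add_eq_sub_sub]
    have eW' : ((Qs f A Q j - (As f A Q j)ᴴ * (Qs f A Q 0 - Bs f A Q j)⁻¹ * As f A Q j) -
        Bs f A Q i)⁻¹ =
        ((Qs f A Q j - Bs f A Q i) -
          (As f A Q j)ᴴ * (Qs f A Q 0 - Bs f A Q j)⁻¹ * As f A Q j)⁻¹ := by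
      rw [sub_right_comm]
    have k1 := key1 _ _ _ _ hP hR hM hW
    have k2 := key2 _ _ _ _ hP hR hM hW
    have k3 := key3 _ _ _ _ hP hR hM hW
    have hPH : ((Qs f A Q 0 - Bs f A Q j)⁻¹)ᴴ = (Qs f A Q 0 - Bs f A Q j)⁻¹ :=
      ((hQ0.sub (herm j).2).inv).eq
    have hRH : ((Qs f A Q j - Bs f A Q i)⁻¹)ᴴ = (Qs f A Q j - Bs f A Q i)⁻¹ :=
      (((herm j).1.sub (herm i).2).inv).eq
    have hstep : i + (j + 1) + 1 = (i + j + 1) + 1 := rfl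
    refine ⟨?_, ?_, ?_⟩
    · -- A-component
      rw [hstep, As_succ f A Q (i + j + 1), ihA, ihB, As_succ f A Q j, Qs_succ f A Q j,
        eM', eW']
      calc As f A Q 0 *
            ((Qs f A Q 0 - Bs f A Q j) - As f A Q j * (Qs f A Q j - Bs f A Q i)⁻¹ * (As f A Q j)ᴴ)⁻¹ *
            (As f A Q j * (Qs f A Q j - Bs f A Q i)⁻¹ * As f A Q i)
          = As f A Q 0 *
            (((Qs f A Q 0 - Bs f A Q j) - As f A Q j * (Qs f A Q j - Bs f A Q i)⁻¹ * (As f A Q j)ᴴ)⁻¹ *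
              As f A Q j * (Qs f A Q j - Bs f A Q i)⁻¹) * As f A Q i := by noncomm_ring
        _ = As f A Q 0 *
            ((Qs f A Q 0 - Bs f A Q j)⁻¹ * As f A Q j *
              ((Qs f A Q j - Bs f A Q i) - (As f A Q j)ᴴ * (Qs f A Q 0 - Bs f A Q j)⁻¹ * As f A Q j)⁻¹) *
            As f A Q i := by rw [k1]
        _ = As f A Q 0 * (Qs f A Q 0 - Bs f A Q j)⁻¹ * As f A Q j *
            ((Qs f A Q j - Bs f A Q i) - (As f A Q j)ᴴ * (Qs f A Q 0 - Bs f A Q j)⁻¹ * As f A Q j)⁻¹ *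
            As f A Q i := by noncomm_ring
    · -- B-component
      rw [hstep, Bs_succ f A Q (i + j + 1), ihB, Bs_succ f A Q j, As_succ f A Q j,
        Qs_succ f A Q j, eM', eW', k2]
      simp only [conjTranspose_mul, hPH, conjTranspose_conjTranspose]
      noncomm_ring
    · -- Q-component
      rw [hstep, Qs_succ f A Q (i + j + 1), ihQ, ihA, ihB, eM', Qs_succ f A Q j, eW', k3]
      simp only [conjTranspose_mul, hRH, conjTranspose_conjTranspose]
      noncomm_ring
end
end

section
/- Let A be invertible. Then a Hermitian positive definite matrix X_S satisfies X_S ≤ Q − A^H f(X_S)^{-1} A if and only if the matrix Q − X_S is Hermitian positive definite and satisfies Q − X_S ≤ Q − f(A) f(Q − X_S)^{-1} f(A)^H. -/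
open Matrix Filter Topology
open scoped ComplexOrder

noncomputable section

/-! An admissible operator is an involutive ring automorphism of `Mat n` preserving the Loewner
cone in both directions. It commutes with `ᴴ` because `f (I • 1)` is central with square `-1`,
hence equal to `± I • 1`. Writing `Y = Q - X_S`, the first inequality says `Aᴴ f(X_S)⁻¹ A ≤ Y`;
both Schur complements of the block matrix `[[f X_S, A], [Aᴴ, Y]]` turn this into
`A Y⁻¹ Aᴴ ≤ f X_S`, and applying `f` gives the second inequality. -/

theorem Matrix.PosDef.posSemidef_sub_conjTranspose_mul_inv_mul_iff {m n R : Type*}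
    [Fintype m] [Fintype n] [DecidableEq m] [DecidableEq n]
    [Field R] [PartialOrder R] [StarRing R] [StarOrderedRing R]
    {P : Matrix m m R} {Y : Matrix n n R} (hP : P.PosDef) (hY : Y.PosDef) (A : Matrix m n R) :
    (Y - Aᴴ * P⁻¹ * A).PosSemidef ↔ (P - A * Y⁻¹ * Aᴴ).PosSemidef := by
  have := hP.isUnit.invertible
  have := hY.isUnit.invertible
  rw [← hP.fromBlocks₁₁ A Y, hY.fromBlocks₂₂ P A]

namespace Admissible

variable {n : ℕ} {f : Mat n → Mat n}

def ringEquiv (hf : Admissible f) : Mat n ≃+* Mat n where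
  toFun := f
  invFun := f
  left_inv := hf.1
  right_inv := hf.1
  map_mul' := hf.2.2.1
  map_add' := hf.2.1

variable (hf : Admissible f)
include hf

@[simp] theorem coe_ringEquiv : ⇑hf.ringEquiv = f := rfl

theorem involutive : Function.Involutive f := hf.1

theorem map_add (X Y : Mat n) : f (X + Y) = f X + f Y := hf.2.1 X Y

theorem map_mul (X Y : Mat n) : f (X * Y) = f X * f Y := hf.2.2.1 X Y

theorem map_sub (X Y : Mat n) : f (X - Y) = f X - f Y := _root_.map_sub hf.ringEquiv X Y

theorem isUnit_iff {X : Mat n} : IsUnit (f X) ↔ IsUnit X :=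
  isUnit_map_iff hf.ringEquiv X

theorem map_inv (X : Mat n) : f X⁻¹ = (f X)⁻¹ := by
  by_cases hX : IsUnit X
  · refine (inv_eq_left_inv ?_).symm
    rw [← hf.map_mul, nonsing_inv_mul _ ((isUnit_iff_isUnit_det X).mp hX)]
    exact _root_.map_one hf.ringEquiv
  · have hfX : ¬IsUnit (f X) := hf.isUnit_iff.not.mpr hX
    rw [nonsing_inv_apply_not_isUnit _ (mt (isUnit_iff_isUnit_det X).mpr hX),
      nonsing_inv_apply_not_isUnit _ (mt (isUnit_iff_isUnit_det _).mpr hfX)]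
    exact _root_.map_zero hf.ringEquiv

theorem posSemidef_iff {X : Mat n} : (f X).PosSemidef ↔ X.PosSemidef :=
  ⟨fun h => hf.involutive X ▸ hf.2.2.2 _ h, hf.2.2.2 X⟩

theorem posDef {X : Mat n} (hX : X.PosDef) : (f X).PosDef :=
  ((hf.posSemidef_iff).mpr hX.posSemidef).posDef_iff_isUnit.mpr (hf.isUnit_iff.mpr hX.isUnit)

open scoped MatrixOrder in
theorem isHermitian {X : Mat n} (hX : X.IsHermitian) : (f X).IsHermitian := by
  obtain ⟨P, N, hP, hN, rfl⟩ := IsSelfAdjoint.exists_nonneg_sub_nonneg hX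
  rw [hf.map_sub]
  exact ((hf.posSemidef_iff).mpr (nonneg_iff_posSemidef.mp hP)).isHermitian.sub
    ((hf.posSemidef_iff).mpr (nonneg_iff_posSemidef.mp hN)).isHermitian

theorem commute_map_I_smul_one (Y : Mat n) : Commute (f (Complex.I • 1)) Y := by
  have := ((Commute.one_left (f Y)).smul_left Complex.I).map hf.ringEquiv
  rwa [hf.coe_ringEquiv, hf.involutive Y] at this

theorem conjTranspose_map_I_smul_one : (f (Complex.I • 1))ᴴ = -f (Complex.I • 1) := by
  obtain ⟨c, hc⟩ := mem_range_scalar_of_commute_single (M := f (Complex.I • 1))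
    fun _ _ _ => (hf.commute_map_I_smul_one _).symm
  rw [scalar_apply, ← smul_one_eq_diagonal] at hc
  have hsq : f (Complex.I • 1) * f (Complex.I • 1) = -1 := by
    have hI : (Complex.I • 1 : Mat n) * (Complex.I • 1) = -1 := by simp [smul_smul]
    rw [← hf.map_mul, hI, ← hf.coe_ringEquiv, _root_.map_neg, _root_.map_one]
  rw [← hc] at hsq ⊢
  have hc1 : (c * c + 1) • (1 : Mat n) = 0 := by
    have : (c * c + 1) • (1 : Mat n) = c • 1 * c • 1 + 1 := by simp [add_smul, smul_smul]
    rw [this, hsq, neg_add_cancel]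
  rcases smul_eq_zero.mp hc1 with hcc | h10
  · have : c ^ 2 = Complex.I ^ 2 := by rw [Complex.I_sq]; linear_combination hcc
    rcases sq_eq_sq_iff_eq_or_eq_neg.mp this with rfl | rfl <;>
      simp [Complex.conj_I]
  · have := subsingleton_of_zero_eq_one h10.symm
    exact Subsingleton.elim _ _

open scoped ComplexStarModule in
theorem map_conjTranspose (X : Mat n) : f Xᴴ = (f X)ᴴ := by
  obtain ⟨H, K, hH, hK, rfl⟩ : ∃ H K : Mat n,
      H.IsHermitian ∧ K.IsHermitian ∧ X = H + (Complex.I • 1) * K :=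
    ⟨ℜ X, ℑ X, (ℜ X).2, (ℑ X).2, by rw [smul_mul_assoc, one_mul, realPart_add_I_smul_imaginaryPart]⟩
  have hconj : (H + (Complex.I • 1) * K)ᴴ = H - (Complex.I • 1) * K := by
    simp [hH.eq, hK.eq, Complex.conj_I, sub_eq_add_neg]
  rw [hconj, hf.map_sub, hf.map_add, hf.map_mul, conjTranspose_add, conjTranspose_mul,
    (hf.isHermitian hH).eq, (hf.isHermitian hK).eq, hf.conjTranspose_map_I_smul_one, mul_neg,
    (hf.commute_map_I_smul_one _).eq, sub_eq_add_neg]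

end Admissible

theorem stmt_5_general {n : ℕ} (f : Mat n → Mat n) (hf : Admissible f)
    (A Q : Mat n) (hA : IsUnit A)
    (XS : Mat n) (hXS : XS.PosDef) :
    (Q - Aᴴ * (f XS)⁻¹ * A - XS).PosSemidef ↔
      ((Q - XS).PosDef ∧
        ((Q - f A * (f (Q - XS))⁻¹ * (f A)ᴴ) - (Q - XS)).PosSemidef) := by
  have hP : (f XS).PosDef := hf.posDef hXS
  have hAPA : (Aᴴ * (f XS)⁻¹ * A).PosDef :=
    hP.inv.conjTranspose_mul_mul_same (mulVec_injective_of_isUnit hA)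
  have hfSchur : f (f XS - A * (Q - XS)⁻¹ * Aᴴ) = XS - f A * (f (Q - XS))⁻¹ * (f A)ᴴ := by
    rw [hf.map_sub, hf.map_mul, hf.map_mul, hf.map_inv, hf.map_conjTranspose, hf.involutive XS]
  rw [sub_right_comm, sub_sub_sub_cancel_left, ← hfSchur, hf.posSemidef_iff]
  refine ⟨fun h => ?_, fun ⟨hY, h⟩ => (hP.posSemidef_sub_conjTranspose_mul_inv_mul_iff hY A).mpr h⟩
  have hY : (Q - XS).PosDef := by simpa using PosDef.posSemidef_add h hAPA
  exact ⟨hY, (hP.posSemidef_sub_conjTranspose_mul_inv_mul_iff hY A).mp h⟩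

/-- for invertible `A`, a Hermitian positive definite `X_S` satisfies
`X_S ≤ Q - Aᴴ f(X_S)⁻¹ A` iff `Q - X_S` is positive definite and
`Q - X_S ≤ Q - f(A) f(Q - X_S)⁻¹ f(A)ᴴ`. -/
theorem stmt_5 {n : ℕ} (f : Mat n → Mat n) (hf : Admissible f)
    (A Q : Mat n) (hA : IsUnit A) (hQ : Q.PosDef)
    (XS : Mat n) (hXS : XS.PosDef) :
    (Q - Aᴴ * (f XS)⁻¹ * A - XS).PosSemidef ↔
      ((Q - XS).PosDef ∧
        ((Q - f A * (f (Q - XS))⁻¹ * (f A)ᴴ) - (Q - XS)).PosSemidef) :=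
  stmt_5_general f hf A Q hA XS hXS
end
end

section
/- Under the standing hypotheses (Condition (C), f continuous, limits X_M of Q^(k) and Y_M of B^(k) exist, and X_M − B^(k) and Q^(k) − Y_M are positive definite for all k ≥ 1), for every k ≥ 1: T_k = T_1^k, S_k = S_1^k, Q^(k) − X_M = (T_1^k)^H (X_M − B^(k)) T_1^k, and Y_M − B^(k) = S_1^k (Q^(k) − Y_M)(S_1^k)^H. -/
open Matrix Filter Topology
open scoped ComplexOrder

noncomputable section

set_option maxHeartbeats 1000000

section Helpers

variable {n : ℕ}

lemma pd_mul_inv {M : Mat n} (h : M.PosDef) : M * M⁻¹ = 1 :=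
  M.mul_nonsing_inv ((Matrix.isUnit_iff_isUnit_det M).1 h.isUnit)

lemma pd_inv_mul {M : Mat n} (h : M.PosDef) : M⁻¹ * M = 1 :=
  M.nonsing_inv_mul ((Matrix.isUnit_iff_isUnit_det M).1 h.isUnit)

lemma herm_inv {M : Mat n} (h : Mᴴ = M) : (M⁻¹)ᴴ = M⁻¹ := by
  rw [Matrix.conjTranspose_nonsing_inv, h]

lemma inv_tendsto {X : ℕ → Mat n} {L : Mat n} (hL : L.PosDef)
    (h : Tendsto X atTop (𝓝 L)) : Tendsto (fun k => (X k)⁻¹) atTop (𝓝 L⁻¹) := by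
  have hdet : L.det ≠ 0 := hL.det_pos.ne'
  have hc : ContinuousAt Inv.inv L := by
    refine continuousAt_matrix_inv L ?_
    rw [Ring.inverse_eq_inv']
    exact continuousAt_inv₀ hdet
  exact hc.tendsto.comp h

-- resolvent: X⁻¹ = Y⁻¹ + Y⁻¹*(Y-X)*X⁻¹ given invertibility
lemma matResolvent {X Y : Mat n} (hX : X.PosDef) (hY : Y.PosDef) :
    X⁻¹ = Y⁻¹ + Y⁻¹ * (Y - X) * X⁻¹ := by
  have h1 : Y⁻¹ * (Y - X) * X⁻¹ = Y⁻¹ * Y * X⁻¹ - Y⁻¹ * (X * X⁻¹) := by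
    noncomm_ring
  rw [h1, pd_inv_mul hY, pd_mul_inv hX, Matrix.one_mul, Matrix.mul_one]
  abel

lemma pd_det {M : Mat n} (h : M.PosDef) : IsUnit M.det :=
  (Matrix.isUnit_iff_isUnit_det M).1 h.isUnit

lemma cancel_li {M : Mat n} (h : M.PosDef) (X : Mat n) : M⁻¹ * (M * X) = X :=
  Matrix.nonsing_inv_mul_cancel_left M X (pd_det h)

lemma cancel_lm {M : Mat n} (h : M.PosDef) (X : Mat n) : M * (M⁻¹ * X) = X :=
  Matrix.mul_nonsing_inv_cancel_left M X (pd_det h)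

lemma cancel_ri {M : Mat n} (h : M.PosDef) (X : Mat n) : X * M⁻¹ * M = X :=
  Matrix.nonsing_inv_mul_cancel_right M X (pd_det h)

lemma cancel_rm {M : Mat n} (h : M.PosDef) (X : Mat n) : X * M * M⁻¹ = X :=
  Matrix.mul_nonsing_inv_cancel_right M X (pd_det h)

theorem nme_abstract {n : ℕ} (a0 b0 q0 XM YM : Mat n)
    (A B Q : ℕ → Mat n)
    (rA0 : A 0 = a0) (rB0 : B 0 = b0) (rQ0 : Q 0 = q0)
    (rA : ∀ k, A (k+1) = a0 * (q0 - B k)⁻¹ * A k)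
    (rB : ∀ k, B (k+1) = b0 + a0 * (q0 - B k)⁻¹ * a0ᴴ)
    (rQ : ∀ k, Q (k+1) = Q k - (A k)ᴴ * (q0 - B k)⁻¹ * A k)
    (hb0 : b0ᴴ = b0) (hq0 : q0ᴴ = q0)
    (tQ : Tendsto Q atTop (𝓝 XM)) (tB : Tendsto B atTop (𝓝 YM))
    (hF : ∀ k, (XM - B k).PosDef) (hM : ∀ k, (Q k - YM).PosDef) :
    ∀ k, (XM - B k)⁻¹ * A k = ((XM - b0)⁻¹ * a0) ^ (k+1) ∧
      A k * (Q k - YM)⁻¹ = (a0 * (q0 - YM)⁻¹) ^ (k+1) ∧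
      Q k - XM = (((XM - b0)⁻¹ * a0) ^ (k+1))ᴴ * (XM - B k) * ((XM - b0)⁻¹ * a0) ^ (k+1) ∧
      YM - B k = (a0 * (q0 - YM)⁻¹) ^ (k+1) * (Q k - YM) * ((a0 * (q0 - YM)⁻¹) ^ (k+1))ᴴ := by
  -- Hermitian facts
  have hermBQ : ∀ k, (B k)ᴴ = B k ∧ (Q k)ᴴ = Q k := by
    intro k; induction k with
    | zero => rw [rB0, rQ0]; exact ⟨hb0, hq0⟩
    | succ k ih =>
      have hK : (q0 - B k)ᴴ = q0 - B k := by rw [Matrix.conjTranspose_sub, hq0, ih.1]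
      have hKi : ((q0 - B k)⁻¹)ᴴ = (q0 - B k)⁻¹ := herm_inv hK
      constructor
      · rw [rB k]
        simp [Matrix.conjTranspose_add, Matrix.conjTranspose_mul, hKi, hb0, Matrix.mul_assoc]
      · rw [rQ k]
        simp [Matrix.conjTranspose_sub, Matrix.conjTranspose_mul, hKi, ih.2, Matrix.mul_assoc]
  have hermK : ∀ k, (q0 - B k)ᴴ = q0 - B k := fun k => by
    rw [Matrix.conjTranspose_sub, hq0, (hermBQ k).1]
  have hermF : ∀ k, (XM - B k)ᴴ = XM - B k := fun k => (hF k).1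
  have hRinf : (q0 - YM).PosDef := by have := hM 0; rwa [rQ0] at this
  have hFb : (XM - b0).PosDef := by have := hF 0; rwa [rB0] at this
  have hermFb : (XM - b0)ᴴ = XM - b0 := hFb.1
  -- limit identity L0
  have tB1 : Tendsto (fun k => B (k+1)) atTop (𝓝 YM) := tB.comp (tendsto_add_atTop_nat 1)
  have tKi : Tendsto (fun k => (q0 - B k)⁻¹) atTop (𝓝 (q0 - YM)⁻¹) :=
    inv_tendsto hRinf (tendsto_const_nhds.sub tB)
  have L0 : YM = b0 + a0 * (q0 - YM)⁻¹ * a0ᴴ := by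
    refine tendsto_nhds_unique tB1 ?_
    have e : (fun k => B (k+1)) = fun k => b0 + a0 * (q0 - B k)⁻¹ * a0ᴴ := funext fun k => rB k
    rw [e]
    exact tendsto_const_nhds.add ((tendsto_const_nhds.mul tKi).mul tendsto_const_nhds)
  -- L4 : Y_M - B k = A k (Q k - Y_M)⁻¹ A kᴴ
  have L4 : ∀ k, YM - B k = A k * (Q k - YM)⁻¹ * (A k)ᴴ := by
    intro k; induction k with
    | zero =>
      rw [rA0, rB0, rQ0]
      conv_lhs => rw [L0]
      exact add_sub_cancel_left b0 _
    | succ k ih =>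
      have hK : (q0 - B k).PosDef := by
        have e : q0 - B k = (q0 - YM) + A k * (Q k - YM)⁻¹ * (A k)ᴴ := by rw [← ih]; abel
        rw [e]
        exact hRinf.add_posSemidef ((hM k).inv.posSemidef.mul_mul_conjTranspose_same (A k))
      have hMk := hM k; have hMk1 := hM (k+1)
      have eM' : Q (k+1) - YM = (Q k - YM) - (A k)ᴴ * (q0 - B k)⁻¹ * A k := by
        rw [rQ k]; abel
      have key1 : A k * (Q k - YM)⁻¹ * (Q (k+1) - YM) = (q0 - YM) * ((q0 - B k)⁻¹ * A k) := by
        rw [eM']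
        have e1 : A k * (Q k - YM)⁻¹ * ((Q k - YM) - (A k)ᴴ * (q0 - B k)⁻¹ * A k)
            = A k * (Q k - YM)⁻¹ * (Q k - YM)
              - A k * (Q k - YM)⁻¹ * (A k)ᴴ * ((q0 - B k)⁻¹ * A k) := by noncomm_ring
        rw [e1, cancel_ri hMk, ← ih]
        have e2 : YM - B k = (q0 - B k) - (q0 - YM) := by abel
        rw [e2]
        have e3 : A k - ((q0 - B k) - (q0 - YM)) * ((q0 - B k)⁻¹ * A k)
            = (A k - (q0 - B k) * ((q0 - B k)⁻¹ * A k)) + (q0 - YM) * ((q0 - B k)⁻¹ * A k) := by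
          noncomm_ring
        rw [e3, cancel_lm hK, sub_self, zero_add]
      have keyS : (q0 - B k)⁻¹ * (A k * (Q (k+1) - YM)⁻¹)
          = (q0 - YM)⁻¹ * (A k * (Q k - YM)⁻¹) := by
        have h1 : A k * (Q k - YM)⁻¹
            = (q0 - YM) * ((q0 - B k)⁻¹ * (A k * (Q (k+1) - YM)⁻¹)) := by
          have h2 := congrArg (fun X => X * (Q (k+1) - YM)⁻¹) key1
          rw [cancel_rm hMk1] at h2
          rw [h2]; noncomm_ring
        rw [h1, cancel_li hRinf]
      have eA' : (A (k+1))ᴴ = (A k)ᴴ * ((q0 - B k)⁻¹ * a0ᴴ) := by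
        rw [rA k]
        simp [Matrix.conjTranspose_mul, herm_inv (hermK k), Matrix.mul_assoc]
      have hdiff : (q0 - YM)⁻¹ - (q0 - B k)⁻¹
          = (q0 - YM)⁻¹ * (A k * (Q k - YM)⁻¹ * (A k)ᴴ) * (q0 - B k)⁻¹ := by
        have hres := matResolvent hK hRinf
        have e : q0 - YM - (q0 - B k) = -(YM - B k) := by abel
        rw [e, ih] at hres
        conv_lhs => rw [hres]
        noncomm_ring
      calc YM - B (k+1)
          = (b0 + a0 * (q0 - YM)⁻¹ * a0ᴴ) - (b0 + a0 * (q0 - B k)⁻¹ * a0ᴴ) := by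
            rw [rB k, ← L0]
        _ = a0 * ((q0 - YM)⁻¹ - (q0 - B k)⁻¹) * a0ᴴ := by noncomm_ring
        _ = a0 * ((q0 - YM)⁻¹ * (A k * (Q k - YM)⁻¹ * (A k)ᴴ) * (q0 - B k)⁻¹) * a0ᴴ := by
            rw [hdiff]
        _ = a0 * (((q0 - YM)⁻¹ * (A k * (Q k - YM)⁻¹)) * ((A k)ᴴ * (q0 - B k)⁻¹)) * a0ᴴ := by
            noncomm_ring
        _ = a0 * (((q0 - B k)⁻¹ * (A k * (Q (k+1) - YM)⁻¹)) * ((A k)ᴴ * (q0 - B k)⁻¹)) * a0ᴴ := by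
            rw [keyS]
        _ = (a0 * (q0 - B k)⁻¹ * A k) * (Q (k+1) - YM)⁻¹ * ((A k)ᴴ * ((q0 - B k)⁻¹ * a0ᴴ)) := by
            noncomm_ring
        _ = A (k+1) * (Q (k+1) - YM)⁻¹ * (A (k+1))ᴴ := by rw [← rA k, ← eA']
  -- extract keyS for all k
  have hKpd : ∀ k, (q0 - B k).PosDef := by
    intro k
    have e : q0 - B k = (q0 - YM) + A k * (Q k - YM)⁻¹ * (A k)ᴴ := by rw [← L4 k]; abel
    rw [e]
    exact hRinf.add_posSemidef ((hM k).inv.posSemidef.mul_mul_conjTranspose_same (A k))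
  have hPpd : ∀ j k, (Q j - B k).PosDef := by
    intro j k
    have e : Q j - B k = (Q j - YM) + A k * (Q k - YM)⁻¹ * (A k)ᴴ := by rw [← L4 k]; abel
    rw [e]
    exact (hM j).add_posSemidef ((hM k).inv.posSemidef.mul_mul_conjTranspose_same (A k))
  have keyS : ∀ k, (q0 - B k)⁻¹ * (A k * (Q (k+1) - YM)⁻¹)
      = (q0 - YM)⁻¹ * (A k * (Q k - YM)⁻¹) := by
    intro k
    have hMk := hM k; have hMk1 := hM (k+1)
    have eM' : Q (k+1) - YM = (Q k - YM) - (A k)ᴴ * (q0 - B k)⁻¹ * A k := by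
      rw [rQ k]; abel
    have key1 : A k * (Q k - YM)⁻¹ * (Q (k+1) - YM) = (q0 - YM) * ((q0 - B k)⁻¹ * A k) := by
      rw [eM']
      have e1 : A k * (Q k - YM)⁻¹ * ((Q k - YM) - (A k)ᴴ * (q0 - B k)⁻¹ * A k)
          = A k * (Q k - YM)⁻¹ * (Q k - YM)
            - A k * (Q k - YM)⁻¹ * (A k)ᴴ * ((q0 - B k)⁻¹ * A k) := by noncomm_ring
      rw [e1, cancel_ri hMk, ← L4 k]
      have e2 : YM - B k = (q0 - B k) - (q0 - YM) := by abel
      rw [e2]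
      have e3 : A k - ((q0 - B k) - (q0 - YM)) * ((q0 - B k)⁻¹ * A k)
          = (A k - (q0 - B k) * ((q0 - B k)⁻¹ * A k)) + (q0 - YM) * ((q0 - B k)⁻¹ * A k) := by
        noncomm_ring
      rw [e3, cancel_lm (hKpd k), sub_self, zero_add]
    have h1 : A k * (Q k - YM)⁻¹
        = (q0 - YM) * ((q0 - B k)⁻¹ * (A k * (Q (k+1) - YM)⁻¹)) := by
      have h2 := congrArg (fun X => X * (Q (k+1) - YM)⁻¹) key1
      rw [cancel_rm hMk1] at h2
      rw [h2]; noncomm_ring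
    rw [h1, cancel_li hRinf]
  -- two-index identities
  have Hfam : ∀ j k, A (j+k+1) = A j * (Q j - B k)⁻¹ * A k
      ∧ B (j+k+1) = B j + A j * (Q j - B k)⁻¹ * (A j)ᴴ
      ∧ Q (j+k+1) = Q k - (A k)ᴴ * (Q j - B k)⁻¹ * A k := by
    intro j; induction j with
    | zero =>
      intro k
      have e0 : 0+k+1 = k+1 := by omega
      rw [e0]
      refine ⟨?_, ?_, ?_⟩
      · rw [rA k, rA0, rQ0]
      · rw [rB k, rB0, rA0, rQ0]
      · rw [rQ k, rQ0]
    | succ j ih =>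
      intro k
      have ihk1 := ih (k+1)
      have iA1 : A (j+1) = A j * (Q j - b0)⁻¹ * a0 := by
        have h := (ih 0).1; rwa [rA0, rB0] at h
      have iB1 : B (j+1) = B j + A j * (Q j - b0)⁻¹ * (A j)ᴴ := by
        have h := (ih 0).2.1; rwa [rB0] at h
      have iQ1 : Q (j+1) = q0 - a0ᴴ * (Q j - b0)⁻¹ * a0 := by
        have h := (ih 0).2.2; rwa [rA0, rB0, rQ0] at h
      have hP : (Q j - b0).PosDef := by have := hPpd j 0; rwa [rB0] at this
      have hermPjb : (Q j - b0)ᴴ = Q j - b0 := hP.1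
      have hKk := hKpd k
      have hN : (Q (j+1) - B k).PosDef := hPpd (j+1) k
      have hL : (Q j - B (k+1)).PosDef := hPpd j (k+1)
      have eN : Q (j+1) - B k = (q0 - B k) - a0ᴴ * (Q j - b0)⁻¹ * a0 := by
        rw [iQ1]; abel
      have eL : Q j - B (k+1) = (Q j - b0) - a0 * (q0 - B k)⁻¹ * a0ᴴ := by
        rw [rB k]; abel
      have star : a0 * (q0 - B k)⁻¹ * (Q (j+1) - B k)
          = (Q j - B (k+1)) * ((Q j - b0)⁻¹ * a0) := by
        rw [eN, eL]
        calc a0 * (q0 - B k)⁻¹ * ((q0 - B k) - a0ᴴ * (Q j - b0)⁻¹ * a0)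
            = a0 * ((q0 - B k)⁻¹ * (q0 - B k))
              - a0 * (q0 - B k)⁻¹ * a0ᴴ * ((Q j - b0)⁻¹ * a0) := by noncomm_ring
          _ = a0 - a0 * (q0 - B k)⁻¹ * a0ᴴ * ((Q j - b0)⁻¹ * a0) := by
              rw [pd_inv_mul hKk, Matrix.mul_one]
          _ = (Q j - b0) * ((Q j - b0)⁻¹ * a0)
              - a0 * (q0 - B k)⁻¹ * a0ᴴ * ((Q j - b0)⁻¹ * a0) := by rw [cancel_lm hP]
          _ = ((Q j - b0) - a0 * (q0 - B k)⁻¹ * a0ᴴ) * ((Q j - b0)⁻¹ * a0) := by noncomm_ring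
      have KEY : (Q j - B (k+1))⁻¹ * (a0 * (q0 - B k)⁻¹)
          = (Q j - b0)⁻¹ * (a0 * (Q (j+1) - B k)⁻¹) := by
        calc (Q j - B (k+1))⁻¹ * (a0 * (q0 - B k)⁻¹)
            = (Q j - B (k+1))⁻¹ * (a0 * (q0 - B k)⁻¹ * (Q (j+1) - B k) * (Q (j+1) - B k)⁻¹) := by
              rw [cancel_rm hN]
          _ = (Q j - B (k+1))⁻¹ * ((Q j - B (k+1)) * ((Q j - b0)⁻¹ * a0) * (Q (j+1) - B k)⁻¹) := by
              rw [star]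
          _ = (Q j - B (k+1))⁻¹ * ((Q j - B (k+1)) * ((Q j - b0)⁻¹ * a0 * (Q (j+1) - B k)⁻¹)) := by
              noncomm_ring
          _ = (Q j - b0)⁻¹ * a0 * (Q (j+1) - B k)⁻¹ := cancel_li hL _
          _ = (Q j - b0)⁻¹ * (a0 * (Q (j+1) - B k)⁻¹) := by noncomm_ring
      have starH : (Q (j+1) - B k) * ((q0 - B k)⁻¹ * a0ᴴ)
          = a0ᴴ * ((Q j - b0)⁻¹ * (Q j - B (k+1))) := by
        rw [eN, eL]
        calc ((q0 - B k) - a0ᴴ * (Q j - b0)⁻¹ * a0) * ((q0 - B k)⁻¹ * a0ᴴ)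
            = (q0 - B k) * ((q0 - B k)⁻¹ * a0ᴴ)
              - a0ᴴ * ((Q j - b0)⁻¹ * (a0 * ((q0 - B k)⁻¹ * a0ᴴ))) := by noncomm_ring
          _ = a0ᴴ - a0ᴴ * ((Q j - b0)⁻¹ * (a0 * ((q0 - B k)⁻¹ * a0ᴴ))) := by rw [cancel_lm hKk]
          _ = a0ᴴ * ((Q j - b0)⁻¹ * (Q j - b0))
              - a0ᴴ * ((Q j - b0)⁻¹ * (a0 * ((q0 - B k)⁻¹ * a0ᴴ))) := by
              rw [pd_inv_mul hP, Matrix.mul_one]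
          _ = a0ᴴ * ((Q j - b0)⁻¹ * ((Q j - b0) - a0 * (q0 - B k)⁻¹ * a0ᴴ)) := by noncomm_ring
      have KEYH : (q0 - B k)⁻¹ * (a0ᴴ * (Q j - B (k+1))⁻¹)
          = (Q (j+1) - B k)⁻¹ * (a0ᴴ * (Q j - b0)⁻¹) := by
        calc (q0 - B k)⁻¹ * (a0ᴴ * (Q j - B (k+1))⁻¹)
            = (Q (j+1) - B k)⁻¹ * ((Q (j+1) - B k) * ((q0 - B k)⁻¹ * (a0ᴴ * (Q j - B (k+1))⁻¹))) := by
              rw [cancel_li hN]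
          _ = (Q (j+1) - B k)⁻¹ * ((Q (j+1) - B k) * ((q0 - B k)⁻¹ * a0ᴴ) * (Q j - B (k+1))⁻¹) := by
              noncomm_ring
          _ = (Q (j+1) - B k)⁻¹ * (a0ᴴ * ((Q j - b0)⁻¹ * (Q j - B (k+1))) * (Q j - B (k+1))⁻¹) := by
              rw [starH]
          _ = (Q (j+1) - B k)⁻¹ * (a0ᴴ * (Q j - b0)⁻¹ * ((Q j - B (k+1)) * (Q j - B (k+1))⁻¹)) := by
              noncomm_ring
          _ = (Q (j+1) - B k)⁻¹ * (a0ᴴ * (Q j - b0)⁻¹) := by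
              rw [pd_mul_inv hL, Matrix.mul_one]
      have eidx : j+1+k+1 = j+(k+1)+1 := by omega
      have eAk1H : (A (k+1))ᴴ = (A k)ᴴ * ((q0 - B k)⁻¹ * a0ᴴ) := by
        rw [rA k]
        simp [Matrix.conjTranspose_mul, herm_inv (hermK k), Matrix.mul_assoc]
      have eAj1H : (A (j+1))ᴴ = a0ᴴ * ((Q j - b0)⁻¹ * (A j)ᴴ) := by
        rw [iA1]
        simp [Matrix.conjTranspose_mul, herm_inv hermPjb, Matrix.mul_assoc]
      refine ⟨?_, ?_, ?_⟩
      · -- H1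
        rw [eidx, ihk1.1, rA k, iA1]
        calc A j * (Q j - B (k+1))⁻¹ * (a0 * (q0 - B k)⁻¹ * A k)
            = A j * ((Q j - B (k+1))⁻¹ * (a0 * (q0 - B k)⁻¹)) * A k := by noncomm_ring
          _ = A j * ((Q j - b0)⁻¹ * (a0 * (Q (j+1) - B k)⁻¹)) * A k := by rw [KEY]
          _ = A j * (Q j - b0)⁻¹ * a0 * (Q (j+1) - B k)⁻¹ * A k := by noncomm_ring
      · -- H2
        have ssL : (Q j - B (k+1))⁻¹
            = (Q j - b0)⁻¹ + (Q j - b0)⁻¹ * (a0 * ((Q (j+1) - B k)⁻¹ * (a0ᴴ * (Q j - b0)⁻¹))) := by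
          have hres := matResolvent hL hP
          have e : (Q j - b0) - (Q j - B (k+1)) = a0 * (q0 - B k)⁻¹ * a0ᴴ := by
            rw [rB k]; abel
          rw [e] at hres
          conv_lhs => rw [hres]
          have e4 : (Q j - b0)⁻¹ * (a0 * (q0 - B k)⁻¹ * a0ᴴ) * (Q j - B (k+1))⁻¹
              = (Q j - b0)⁻¹ * (a0 * ((q0 - B k)⁻¹ * (a0ᴴ * (Q j - B (k+1))⁻¹))) := by
            noncomm_ring
          rw [e4, KEYH]
        rw [eidx, ihk1.2.1, iB1, eAj1H, iA1, ssL]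
        noncomm_ring
      · -- H3
        have ssN : (Q (j+1) - B k)⁻¹
            = (q0 - B k)⁻¹ + (q0 - B k)⁻¹ * (a0ᴴ * ((Q j - B (k+1))⁻¹ * (a0 * (q0 - B k)⁻¹))) := by
          have hres := matResolvent hN hKk
          have e : (q0 - B k) - (Q (j+1) - B k) = a0ᴴ * (Q j - b0)⁻¹ * a0 := by
            rw [iQ1]; abel
          rw [e] at hres
          conv_lhs => rw [hres]
          have e4 : (q0 - B k)⁻¹ * (a0ᴴ * (Q j - b0)⁻¹ * a0) * (Q (j+1) - B k)⁻¹
              = (q0 - B k)⁻¹ * (a0ᴴ * ((Q j - b0)⁻¹ * (a0 * (Q (j+1) - B k)⁻¹))) := by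
            noncomm_ring
          rw [e4, ← KEY]
        rw [eidx, ihk1.2.2, rQ k, eAk1H, rA k, ssN]
        noncomm_ring
  -- limit identity J1
  have J1 : q0 - XM = a0ᴴ * ((XM - b0)⁻¹ * a0) := by
    have eq : ∀ j, Q (j+1) = q0 - a0ᴴ * ((Q j - b0)⁻¹ * a0) := by
      intro j
      have h := (Hfam j 0).2.2
      rw [rA0, rB0, rQ0] at h
      rw [h]; noncomm_ring
    have t1 : Tendsto (fun j => Q (j+1)) atTop (𝓝 XM) := tQ.comp (tendsto_add_atTop_nat 1)
    have tP : Tendsto (fun j => (Q j - b0)⁻¹) atTop (𝓝 (XM - b0)⁻¹) :=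
      inv_tendsto hFb (tQ.sub tendsto_const_nhds)
    have t2 : Tendsto (fun j => q0 - a0ᴴ * ((Q j - b0)⁻¹ * a0)) atTop
        (𝓝 (q0 - a0ᴴ * ((XM - b0)⁻¹ * a0))) :=
      tendsto_const_nhds.sub (tendsto_const_nhds.mul (tP.mul tendsto_const_nhds))
    have huniq : XM = q0 - a0ᴴ * ((XM - b0)⁻¹ * a0) := by
      refine tendsto_nhds_unique t1 ?_
      have e : (fun j => Q (j+1)) = fun j => q0 - a0ᴴ * ((Q j - b0)⁻¹ * a0) := funext eq
      rw [e]; exact t2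
    conv_lhs => rw [huniq]
    abel
  -- key identity for the T recursion
  have keyT : ∀ k, (XM - B (k+1))⁻¹ * (a0 * (q0 - B k)⁻¹)
      = (XM - b0)⁻¹ * (a0 * (XM - B k)⁻¹) := by
    intro k
    have eF' : XM - B (k+1) = (XM - b0) - a0 * (q0 - B k)⁻¹ * a0ᴴ := by
      rw [rB k]; abel
    have starT : a0 * (q0 - B k)⁻¹ * (XM - B k) = (XM - B (k+1)) * ((XM - b0)⁻¹ * a0) := by
      rw [eF']
      have e : XM - B k = (q0 - B k) - (q0 - XM) := by abel
      calc a0 * (q0 - B k)⁻¹ * (XM - B k)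
          = a0 * ((q0 - B k)⁻¹ * (q0 - B k)) - a0 * (q0 - B k)⁻¹ * (q0 - XM) := by
            rw [e]; noncomm_ring
        _ = a0 - a0 * (q0 - B k)⁻¹ * (q0 - XM) := by rw [pd_inv_mul (hKpd k), Matrix.mul_one]
        _ = (XM - b0) * ((XM - b0)⁻¹ * a0)
            - a0 * (q0 - B k)⁻¹ * (a0ᴴ * ((XM - b0)⁻¹ * a0)) := by
            rw [cancel_lm hFb, ← J1]
        _ = ((XM - b0) - a0 * (q0 - B k)⁻¹ * a0ᴴ) * ((XM - b0)⁻¹ * a0) := by noncomm_ring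
    calc (XM - B (k+1))⁻¹ * (a0 * (q0 - B k)⁻¹)
        = (XM - B (k+1))⁻¹ * (a0 * (q0 - B k)⁻¹ * (XM - B k) * (XM - B k)⁻¹) := by
          rw [cancel_rm (hF k)]
      _ = (XM - B (k+1))⁻¹ * ((XM - B (k+1)) * ((XM - b0)⁻¹ * a0) * (XM - B k)⁻¹) := by
          rw [starT]
      _ = (XM - B (k+1))⁻¹ * ((XM - B (k+1)) * ((XM - b0)⁻¹ * a0 * (XM - B k)⁻¹)) := by
          noncomm_ring
      _ = (XM - b0)⁻¹ * a0 * (XM - B k)⁻¹ := cancel_li (hF (k+1)) _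
      _ = (XM - b0)⁻¹ * (a0 * (XM - B k)⁻¹) := by noncomm_ring
  have keyTH : ∀ k, (q0 - B k)⁻¹ * (a0ᴴ * (XM - B (k+1))⁻¹)
      = (XM - B k)⁻¹ * (a0ᴴ * (XM - b0)⁻¹) := by
    intro k
    have eF' : XM - B (k+1) = (XM - b0) - a0 * (q0 - B k)⁻¹ * a0ᴴ := by
      rw [rB k]; abel
    have starTH : a0ᴴ * ((XM - b0)⁻¹ * (XM - B (k+1))) = (XM - B k) * ((q0 - B k)⁻¹ * a0ᴴ) := by
      rw [eF']
      have e : XM - B k = (q0 - B k) - (q0 - XM) := by abel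
      calc a0ᴴ * ((XM - b0)⁻¹ * ((XM - b0) - a0 * (q0 - B k)⁻¹ * a0ᴴ))
          = a0ᴴ * ((XM - b0)⁻¹ * (XM - b0))
            - a0ᴴ * ((XM - b0)⁻¹ * a0) * ((q0 - B k)⁻¹ * a0ᴴ) := by noncomm_ring
        _ = a0ᴴ - a0ᴴ * ((XM - b0)⁻¹ * a0) * ((q0 - B k)⁻¹ * a0ᴴ) := by
            rw [pd_inv_mul hFb, Matrix.mul_one]
        _ = (q0 - B k) * ((q0 - B k)⁻¹ * a0ᴴ) - (q0 - XM) * ((q0 - B k)⁻¹ * a0ᴴ) := by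
            rw [cancel_lm (hKpd k), ← J1]
        _ = ((q0 - B k) - (q0 - XM)) * ((q0 - B k)⁻¹ * a0ᴴ) := by noncomm_ring
        _ = (XM - B k) * ((q0 - B k)⁻¹ * a0ᴴ) := by rw [← e]
    calc (q0 - B k)⁻¹ * (a0ᴴ * (XM - B (k+1))⁻¹)
        = (XM - B k)⁻¹ * ((XM - B k) * ((q0 - B k)⁻¹ * (a0ᴴ * (XM - B (k+1))⁻¹))) := by
          rw [cancel_li (hF k)]
      _ = (XM - B k)⁻¹ * ((XM - B k) * ((q0 - B k)⁻¹ * a0ᴴ) * (XM - B (k+1))⁻¹) := by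
          noncomm_ring
      _ = (XM - B k)⁻¹ * (a0ᴴ * ((XM - b0)⁻¹ * (XM - B (k+1))) * (XM - B (k+1))⁻¹) := by
          rw [starTH]
      _ = (XM - B k)⁻¹ * (a0ᴴ * (XM - b0)⁻¹ * ((XM - B (k+1)) * (XM - B (k+1))⁻¹)) := by
          noncomm_ring
      _ = (XM - B k)⁻¹ * (a0ᴴ * (XM - b0)⁻¹) := by rw [pd_mul_inv (hF (k+1)), Matrix.mul_one]
  -- L3
  have L3 : ∀ k, Q k - XM = (A k)ᴴ * (XM - B k)⁻¹ * A k := by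
    intro k; induction k with
    | zero =>
      rw [rA0, rB0, rQ0, J1]; noncomm_ring
    | succ k ih =>
      have hdT : (XM - B k)⁻¹ - (q0 - B k)⁻¹
          = (XM - B k)⁻¹ * ((q0 - XM) * (q0 - B k)⁻¹) := by
        have hres := matResolvent (hKpd k) (hF k)
        have e : XM - B k - (q0 - B k) = -(q0 - XM) := by abel
        rw [e] at hres
        conv_lhs => rw [hres]
        noncomm_ring
      have eAk1H : (A (k+1))ᴴ = (A k)ᴴ * ((q0 - B k)⁻¹ * a0ᴴ) := by
        rw [rA k]
        simp [Matrix.conjTranspose_mul, herm_inv (hermK k), Matrix.mul_assoc]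
      rw [rQ k, eAk1H, rA k]
      calc Q k - (A k)ᴴ * (q0 - B k)⁻¹ * A k - XM
          = (Q k - XM) - (A k)ᴴ * (q0 - B k)⁻¹ * A k := by abel
        _ = (A k)ᴴ * ((XM - B k)⁻¹ - (q0 - B k)⁻¹) * A k := by rw [ih]; noncomm_ring
        _ = (A k)ᴴ * ((XM - B k)⁻¹ * ((q0 - XM) * (q0 - B k)⁻¹)) * A k := by rw [hdT]
        _ = (A k)ᴴ * ((XM - B k)⁻¹ * (a0ᴴ * ((XM - b0)⁻¹ * a0) * (q0 - B k)⁻¹)) * A k := by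
            rw [J1]
        _ = (A k)ᴴ * (((XM - B k)⁻¹ * (a0ᴴ * (XM - b0)⁻¹)) * (a0 * (q0 - B k)⁻¹)) * A k := by
            noncomm_ring
        _ = (A k)ᴴ * (((q0 - B k)⁻¹ * (a0ᴴ * (XM - B (k+1))⁻¹)) * (a0 * (q0 - B k)⁻¹)) * A k := by
            rw [keyTH k]
        _ = (A k)ᴴ * ((q0 - B k)⁻¹ * a0ᴴ) * (XM - B (k+1))⁻¹ * (a0 * (q0 - B k)⁻¹ * A k) := by
            noncomm_ring
  -- power formulas
  have Tpow : ∀ k, (XM - B k)⁻¹ * A k = ((XM - b0)⁻¹ * a0) ^ (k+1) := by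
    intro k; induction k with
    | zero => rw [rA0, rB0, pow_one]
    | succ k ih =>
      rw [rA k]
      calc (XM - B (k+1))⁻¹ * (a0 * (q0 - B k)⁻¹ * A k)
          = ((XM - B (k+1))⁻¹ * (a0 * (q0 - B k)⁻¹)) * A k := by noncomm_ring
        _ = ((XM - b0)⁻¹ * (a0 * (XM - B k)⁻¹)) * A k := by rw [keyT k]
        _ = ((XM - b0)⁻¹ * a0) * ((XM - B k)⁻¹ * A k) := by noncomm_ring
        _ = ((XM - b0)⁻¹ * a0) * ((XM - b0)⁻¹ * a0) ^ (k+1) := by rw [ih]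
        _ = ((XM - b0)⁻¹ * a0) ^ (k+1+1) := (pow_succ' _ _).symm
  have Spow : ∀ k, A k * (Q k - YM)⁻¹ = (a0 * (q0 - YM)⁻¹) ^ (k+1) := by
    intro k; induction k with
    | zero => rw [rA0, rQ0, pow_one]
    | succ k ih =>
      rw [rA k]
      calc a0 * (q0 - B k)⁻¹ * A k * (Q (k+1) - YM)⁻¹
          = a0 * ((q0 - B k)⁻¹ * (A k * (Q (k+1) - YM)⁻¹)) := by noncomm_ring
        _ = a0 * ((q0 - YM)⁻¹ * (A k * (Q k - YM)⁻¹)) := by rw [keyS k]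
        _ = (a0 * (q0 - YM)⁻¹) * (A k * (Q k - YM)⁻¹) := by noncomm_ring
        _ = (a0 * (q0 - YM)⁻¹) * (a0 * (q0 - YM)⁻¹) ^ (k+1) := by rw [ih]
        _ = (a0 * (q0 - YM)⁻¹) ^ (k+1+1) := (pow_succ' _ _).symm
  -- assemble
  have hermM : ∀ k, (Q k - YM)ᴴ = Q k - YM := fun k => (hM k).1
  intro k
  refine ⟨Tpow k, Spow k, ?_, ?_⟩
  · rw [← Tpow k]
    have e : ((XM - B k)⁻¹ * A k)ᴴ = (A k)ᴴ * (XM - B k)⁻¹ := by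
      simp [Matrix.conjTranspose_mul, herm_inv (hermF k)]
    rw [e]
    calc Q k - XM
        = (A k)ᴴ * (XM - B k)⁻¹ * A k := L3 k
      _ = ((A k)ᴴ * (XM - B k)⁻¹ * (XM - B k)) * ((XM - B k)⁻¹ * A k) := by
          rw [cancel_ri (hF k), Matrix.mul_assoc]
      _ = (A k)ᴴ * (XM - B k)⁻¹ * (XM - B k) * ((XM - B k)⁻¹ * A k) := by noncomm_ring
  · rw [← Spow k]
    have e : (A k * (Q k - YM)⁻¹)ᴴ = (Q k - YM)⁻¹ * (A k)ᴴ := by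
      simp [Matrix.conjTranspose_mul, herm_inv (hermM k)]
    rw [e]
    calc YM - B k
        = A k * (Q k - YM)⁻¹ * (A k)ᴴ := L4 k
      _ = (A k * (Q k - YM)⁻¹ * (Q k - YM)) * ((Q k - YM)⁻¹ * (A k)ᴴ) := by
          rw [cancel_ri (hM k), Matrix.mul_assoc]
      _ = A k * (Q k - YM)⁻¹ * (Q k - YM) * ((Q k - YM)⁻¹ * (A k)ᴴ) := by noncomm_ring


end Helpers

/-- `T_k = T_1^k`, `S_k = S_1^k`, and the error formulas
`Q^{(k)} - X_M = (T_1^k)ᴴ (X_M - B^{(k)}) T_1^k`,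
`Y_M - B^{(k)} = S_1^k (Q^{(k)} - Y_M) (S_1^k)ᴴ` (indices shifted by one). -/
theorem stmt_14 {n : ℕ} (f : Mat n → Mat n) (hf : Admissible f) (hfc : Continuous f)
    (A Q : Mat n) (hQ : Q.PosDef)
    (hC : ∃ XS : Mat n, XS.PosDef ∧ (Q - Aᴴ * (f XS)⁻¹ * A - XS).PosSemidef)
    (XM YM : Mat n)
    (hXM : Tendsto (fun k => Qs f A Q k) atTop (𝓝 XM))
    (hYM : Tendsto (fun k => Bs f A Q k) atTop (𝓝 YM))
    (hpd : ∀ k, (XM - Bs f A Q k).PosDef ∧ (Qs f A Q k - YM).PosDef)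
    (T1 S1 : Mat n)
    (hT1 : T1 = (XM - Bs f A Q 0)⁻¹ * As f A Q 0)
    (hS1 : S1 = As f A Q 0 * (Qs f A Q 0 - YM)⁻¹) :
    ∀ k : ℕ,
      (XM - Bs f A Q k)⁻¹ * As f A Q k = T1 ^ (k + 1) ∧
      As f A Q k * (Qs f A Q k - YM)⁻¹ = S1 ^ (k + 1) ∧
      Qs f A Q k - XM = (T1 ^ (k + 1))ᴴ * (XM - Bs f A Q k) * T1 ^ (k + 1) ∧
      YM - Bs f A Q k = S1 ^ (k + 1) * (Qs f A Q k - YM) * (S1 ^ (k + 1))ᴴ := by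
  have hfQ : (f Q)ᴴ = f Q := (hf.2.2.2 Q hQ.posSemidef).1.eq
  have hfQi : ((f Q)⁻¹)ᴴ = (f Q)⁻¹ := herm_inv hfQ
  have hb0 : (f A * (f Q)⁻¹ * (f A)ᴴ)ᴴ = f A * (f Q)⁻¹ * (f A)ᴴ := by
    simp [Matrix.conjTranspose_mul, hfQi, Matrix.mul_assoc]
  have hq0 : (Q - Aᴴ * (f Q)⁻¹ * A)ᴴ = Q - Aᴴ * (f Q)⁻¹ * A := by
    simp [Matrix.conjTranspose_sub, Matrix.conjTranspose_mul, hfQi, hQ.1.eq, Matrix.mul_assoc]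
  have main := nme_abstract (f A * (f Q)⁻¹ * A) (f A * (f Q)⁻¹ * (f A)ᴴ)
    (Q - Aᴴ * (f Q)⁻¹ * A) XM YM (As f A Q) (Bs f A Q) (Qs f A Q)
    rfl rfl rfl (fun k => rfl) (fun k => rfl) (fun k => rfl)
    hb0 hq0 hXM hYM (fun k => (hpd k).1) (fun k => (hpd k).2)
  have eT : T1 = (XM - f A * (f Q)⁻¹ * (f A)ᴴ)⁻¹ * (f A * (f Q)⁻¹ * A) := hT1
  have eS : S1 = f A * (f Q)⁻¹ * A * (Q - Aᴴ * (f Q)⁻¹ * A - YM)⁻¹ := hS1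
  intro k
  obtain ⟨h1, h2, h3, h4⟩ := main k
  refine ⟨?_, ?_, ?_, ?_⟩
  · rw [eT]; exact h1
  · rw [eS]
    have : (f A * (f Q)⁻¹ * A * ((Q - Aᴴ * (f Q)⁻¹ * A) - YM)⁻¹) ^ (k+1)
        = (f A * (f Q)⁻¹ * A * ((Q - Aᴴ * (f Q)⁻¹ * A) - YM)⁻¹) ^ (k+1) := rfl
    exact h2
  · rw [eT]; exact h3
  · rw [eS]; exact h4
end
end

section
/- Suppose X_M is Hermitian with X_M − B^(1) positive definite and X_M = Q^(1) − (A^(1))^H (X_M − B^(1))^{-1} A^(1), and Y_M is Hermitian with Q^(1) − Y_M positive definite and Y_M = B^(1) + A^(1)(Q^(1) − Y_M)^{-1}(A^(1))^H. Set T_1 = (X_M − B^(1))^{-1} A^(1) and S_1 = A^(1)(Q^(1) − Y_M)^{-1}. Then T_1 S_1^H = (X_M − B^(1))^{-1}(Y_M − B^(1)) and S_1^H T_1 = (Q^(1) − Y_M)^{-1}(Q^(1) − X_M); moreover, if Y_M ≥ B^(1) then every eigenvalue of T_1 S_1^H is real and nonnegative. -/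
open Matrix Filter Topology
open scoped ComplexOrder

noncomputable section

/-!
Both Riccati equations rewrite the products `T₁ S₁ᴴ` and `S₁ᴴ T₁` by reassociation alone:
`A₁ (Q₁ - Y_M)⁻¹ A₁ᴴ = Y_M - B₁` and `A₁ᴴ (X_M - B₁)⁻¹ A₁ = Q₁ - X_M`. For the spectrum, write
the positive semidefinite `(X_M - B₁)⁻¹` as `Bᴴ B`; then `Bᴴ (B (Y_M - B₁))` has the same nonzero
spectrum as the positive semidefinite `B (Y_M - B₁) Bᴴ`.
-/

namespace Matrix

variable {𝕜 n : Type*} [RCLike 𝕜] [Fintype n] [DecidableEq n]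

open scoped MatrixOrder in
lemma nonneg_of_mem_spectrum_posSemidef_mul {P M : Matrix n n 𝕜} (hP : P.PosSemidef)
    (hM : M.PosSemidef) {μ : 𝕜} (hμ : μ ∈ spectrum 𝕜 (P * M)) : 0 ≤ μ := by
  obtain ⟨B, rfl⟩ := CStarAlgebra.nonneg_iff_eq_star_mul_self.mp hP.nonneg
  rcases eq_or_ne μ 0 with rfl | hμ0
  · exact le_rfl
  have hμ' : μ ∈ spectrum 𝕜 (B * M * Bᴴ) := by
    have h := spectrum.nonzero_mul_comm (𝕜 := 𝕜) (star B) (B * M)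
    rw [← Matrix.mul_assoc] at h
    exact (h.subset ⟨hμ, hμ0⟩).1
  exact (posSemidef_iff_isHermitian_and_spectrum_nonneg.mp
    (hM.mul_mul_conjTranspose_same B)).2 hμ'

end Matrix

theorem stmt_15_general {n : ℕ}
    (A1 B1 Q1 XM YM T1 S1 : Mat n)
    (hXMpd : (XM - B1).PosDef)
    (hXMeq : XM = Q1 - A1ᴴ * (XM - B1)⁻¹ * A1)
    (hYMpd : (Q1 - YM).PosDef)
    (hYMeq : YM = B1 + A1 * (Q1 - YM)⁻¹ * A1ᴴ)
    (hT1 : T1 = (XM - B1)⁻¹ * A1)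
    (hS1 : S1 = A1 * (Q1 - YM)⁻¹) :
    T1 * S1ᴴ = (XM - B1)⁻¹ * (YM - B1) ∧
    S1ᴴ * T1 = (Q1 - YM)⁻¹ * (Q1 - XM) ∧
    ((YM - B1).PosSemidef →
      ∀ μ ∈ spectrum ℂ (T1 * S1ᴴ), ∃ r : ℝ, 0 ≤ r ∧ μ = (r : ℂ)) := by
  have hS1H : S1ᴴ = (Q1 - YM)⁻¹ * A1ᴴ := by
    rw [hS1, conjTranspose_mul, conjTranspose_nonsing_inv, hYMpd.isHermitian.eq]
  have hYB : YM - B1 = A1 * (Q1 - YM)⁻¹ * A1ᴴ := sub_eq_of_eq_add' hYMeq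
  have hQX : Q1 - XM = A1ᴴ * (XM - B1)⁻¹ * A1 :=
    sub_eq_of_eq_add' (eq_sub_iff_add_eq.mp hXMeq).symm
  have hTS : T1 * S1ᴴ = (XM - B1)⁻¹ * (YM - B1) := by
    rw [hT1, hS1H, hYB]; simp only [Matrix.mul_assoc]
  refine ⟨hTS, by rw [hT1, hS1H, hQX]; simp only [Matrix.mul_assoc], fun hYB_psd μ hμ => ?_⟩
  rw [hTS] at hμ
  obtain ⟨r, hr, rfl⟩ := RCLike.nonneg_iff_exists_ofReal.mp
    (nonneg_of_mem_spectrum_posSemidef_mul hXMpd.inv.posSemidef hYB_psd hμ)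
  exact ⟨r, hr, rfl⟩

/-- formulas for `T_1 S_1ᴴ` and `S_1ᴴ T_1`, and nonnegativity of the
eigenvalues of `T_1 S_1ᴴ` when `Y_M ≥ B^{(1)}`. -/
theorem stmt_15 {n : ℕ} (f : Mat n → Mat n) (hf : Admissible f)
    (A Q : Mat n) (hQ : Q.PosDef)
    (A1 B1 Q1 XM YM T1 S1 : Mat n)
    (hA1 : A1 = f A * (f Q)⁻¹ * A)
    (hB1 : B1 = f A * (f Q)⁻¹ * (f A)ᴴ)
    (hQ1 : Q1 = Q - Aᴴ * (f Q)⁻¹ * A)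
    (hXMh : XM.IsHermitian) (hXMpd : (XM - B1).PosDef)
    (hXMeq : XM = Q1 - A1ᴴ * (XM - B1)⁻¹ * A1)
    (hYMh : YM.IsHermitian) (hYMpd : (Q1 - YM).PosDef)
    (hYMeq : YM = B1 + A1 * (Q1 - YM)⁻¹ * A1ᴴ)
    (hT1 : T1 = (XM - B1)⁻¹ * A1)
    (hS1 : S1 = A1 * (Q1 - YM)⁻¹) :
    T1 * S1ᴴ = (XM - B1)⁻¹ * (YM - B1) ∧
    S1ᴴ * T1 = (Q1 - YM)⁻¹ * (Q1 - XM) ∧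
    ((YM - B1).PosSemidef →
      ∀ μ ∈ spectrum ℂ (T1 * S1ᴴ), ∃ r : ℝ, 0 ≤ r ∧ μ = (r : ℂ)) :=
  stmt_15_general A1 B1 Q1 XM YM T1 S1 hXMpd hXMeq hYMpd hYMeq hT1 hS1
end
end
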